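/- arXiv:2505.07570 — 3 statements merged into one kernel-verified Lean document; each statement's English description precedes it below -/
import Mathlib

section
/- Let s₀, s₁, s₂, … be real numbers and for T ∈ ℕ define the Hankel matrices S₀ᵀ with entries (S₀ᵀ)_{ij} = s_{i+j−2} for 1 ≤ i,j ≤ T, and S₁ᵀ with entries (S₁ᵀ)_{ij} = s_{i+j−1}. Define h₀, h₁, h₂, … by h_{2k} = sₖ and h_{2k+1} = 0, and let H₀^{2T} be the 2T×2T Hankel matrix with (H₀^{2T})_{ij} = h_{i+j−2}. Then det(H₀^{2T}) = det(S₀ᵀ) · det(S₁ᵀ). -/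
open Matrix

/-- The `T×T` Hankel matrix with entries `s (i + j + m)` (`0`-based indices). -/
def hankel (s : ℕ → ℝ) (m T : ℕ) : Matrix (Fin T) (Fin T) ℝ :=
  Matrix.of fun i j => s ((i : ℕ) + (j : ℕ) + m)

/-- The zero-interleaved sequence: `h_{2k} = sₖ`, `h_{2k+1} = 0`. -/
def interleave (s : ℕ → ℝ) (m : ℕ) : ℝ :=
  if m % 2 = 0 then s (m / 2) else 0

/-- Even/odd indexing equivalence. -/
def evenOddEquiv (T : ℕ) : Fin T ⊕ Fin T ≃ Fin (2 * T) where
  toFun x := match x with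
    | .inl i => ⟨2 * i, by omega⟩
    | .inr i => ⟨2 * i + 1, by omega⟩
  invFun j :=
    if h : (j : ℕ) % 2 = 0 then .inl ⟨(j : ℕ) / 2, by omega⟩
    else .inr ⟨(j : ℕ) / 2, by omega⟩
  left_inv x := by
    cases x with
    | inl i =>
      dsimp only
      rw [dif_pos (by omega)]
      congr 1; ext; simp
    | inr i =>
      dsimp only
      rw [dif_neg (by omega)]
      congr 1; ext; simp; omega
  right_inv j := by
    by_cases h : (j : ℕ) % 2 = 0
    · simp only [h, dif_pos]
      ext; simp; omega
    · simp only [h, dif_neg]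
      ext; simp; omega

lemma interleaved_block (s : ℕ → ℝ) (T : ℕ) :
    (hankel (interleave s) 0 (2 * T)).submatrix (evenOddEquiv T) (evenOddEquiv T) =
      Matrix.fromBlocks (hankel s 0 T) 0 0 (hankel s 1 T) := by
  ext i j
  cases i with
  | inl i =>
    cases j with
    | inl j =>
      simp only [Matrix.submatrix_apply, Matrix.fromBlocks_apply₁₁, hankel, evenOddEquiv,
        Matrix.of_apply, Equiv.coe_fn_mk, interleave]
      rw [if_pos (by omega)]
      congr 1; omega
    | inr j =>
      simp only [Matrix.submatrix_apply, Matrix.fromBlocks_apply₁₂, hankel, evenOddEquiv,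
        Matrix.of_apply, Equiv.coe_fn_mk, interleave]
      rw [if_neg (by omega)]
      rfl
  | inr i =>
    cases j with
    | inl j =>
      simp only [Matrix.submatrix_apply, Matrix.fromBlocks_apply₂₁, hankel, evenOddEquiv,
        Matrix.of_apply, Equiv.coe_fn_mk, interleave]
      rw [if_neg (by omega)]
      rfl
    | inr j =>
      simp only [Matrix.submatrix_apply, Matrix.fromBlocks_apply₂₂, hankel, evenOddEquiv,
        Matrix.of_apply, Equiv.coe_fn_mk, interleave]
      rw [if_pos (by omega)]
      congr 1; omega

/-- `det H₀^{2T} = det S₀ᵀ · det S₁ᵀ`, where `S₀ᵀ, S₁ᵀ` are the Hankel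
matrices of `(sₖ)` and `H₀^{2T}` is the Hankel matrix of the zero-interleaved sequence. -/
theorem interleaved_hankel_det (s : ℕ → ℝ) (T : ℕ) :
    (hankel (interleave s) 0 (2 * T)).det =
      (hankel s 0 T).det * (hankel s 1 T).det := by
  rw [← Matrix.det_submatrix_equiv_self (evenOddEquiv T), interleaved_block,
    Matrix.det_fromBlocks_zero₂₁]
end

section
/- With notation as follows: sₖ real, S₀ᵀ and S₁ᵀ the Hankel matrices (S₀ᵀ)_{ij} = s_{i+j−2}, (S₁ᵀ)_{ij} = s_{i+j−1} (size T), hₘ the interleaved sequence h_{2k} = sₖ, h_{2k+1} = 0, and H₀^{2T}, H₁^{2T} the Hankel matrices of size 2T with entries h_{i+j−2} and h_{i+j−1} respectively. Then for all λ ∈ ℝ, det(λ·H₀^{2T} − H₁^{2T}) = det(λ²·S₀ᵀ − S₁ᵀ) · det(S₁ᵀ). -/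
open Matrix

/-- The parity interleaving equivalence `Fin T ⊕ Fin T ≃ Fin (2T)`. -/
def pairEquiv (T : ℕ) : Fin T ⊕ Fin T ≃ Fin (2 * T) where
  toFun x := Sum.elim (fun a : Fin T => (⟨2 * a, by omega⟩ : Fin (2 * T)))
    (fun a : Fin T => (⟨2 * a + 1, by omega⟩ : Fin (2 * T))) x
  invFun m := if h : (m : ℕ) % 2 = 0 then Sum.inl ⟨(m : ℕ) / 2, by have := m.isLt; omega⟩
    else Sum.inr ⟨(m : ℕ) / 2, by have := m.isLt; omega⟩
  left_inv x := by
    rcases x with a | a <;> dsimp only [Sum.elim_inl, Sum.elim_inr]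
    · rw [dif_pos (by omega)]
      congr 1
      exact Fin.ext (by simp only [Fin.val_mk]; omega)
    · rw [dif_neg (by omega)]
      congr 1
      exact Fin.ext (by simp only [Fin.val_mk]; omega)
  right_inv m := by
    dsimp only
    by_cases h : (m : ℕ) % 2 = 0
    · rw [dif_pos h]
      exact Fin.ext (by simp only [Sum.elim_inl, Fin.val_mk]; omega)
    · rw [dif_neg h]
      exact Fin.ext (by simp only [Sum.elim_inr, Fin.val_mk]; omega)

/-- Determinant of the block swap matrix. -/
lemma det_swapBlocks (T : ℕ) :
    (fromBlocks (0 : Matrix (Fin T) (Fin T) ℝ) (1 : Matrix (Fin T) (Fin T) ℝ)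
      (1 : Matrix (Fin T) (Fin T) ℝ) (0 : Matrix (Fin T) (Fin T) ℝ)).det = (-1 : ℝ) ^ T := by
  have hfac : fromBlocks (0 : Matrix (Fin T) (Fin T) ℝ) (1 : Matrix (Fin T) (Fin T) ℝ)
        (1 : Matrix (Fin T) (Fin T) ℝ) (0 : Matrix (Fin T) (Fin T) ℝ) =
      fromBlocks (1 : Matrix (Fin T) (Fin T) ℝ) (0 : Matrix (Fin T) (Fin T) ℝ)
        (0 : Matrix (Fin T) (Fin T) ℝ) (-1 : Matrix (Fin T) (Fin T) ℝ) *
        (fromBlocks (1 : Matrix (Fin T) (Fin T) ℝ) (1 : Matrix (Fin T) (Fin T) ℝ)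
          (0 : Matrix (Fin T) (Fin T) ℝ) (1 : Matrix (Fin T) (Fin T) ℝ) *
        fromBlocks (1 : Matrix (Fin T) (Fin T) ℝ) (0 : Matrix (Fin T) (Fin T) ℝ)
          (-1 : Matrix (Fin T) (Fin T) ℝ) (1 : Matrix (Fin T) (Fin T) ℝ) *
        fromBlocks (1 : Matrix (Fin T) (Fin T) ℝ) (1 : Matrix (Fin T) (Fin T) ℝ)
          (0 : Matrix (Fin T) (Fin T) ℝ) (1 : Matrix (Fin T) (Fin T) ℝ)) := by
    simp only [fromBlocks_multiply, Matrix.mul_one, Matrix.one_mul, Matrix.mul_zero,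
      Matrix.zero_mul, Matrix.mul_neg, Matrix.neg_mul, add_zero, zero_add]
    norm_num
  rw [hfac]
  simp [det_mul, det_fromBlocks_zero₂₁, det_fromBlocks_zero₁₂, det_neg, Fintype.card_fin]

/-- `det(λ·H₀^{2T} − H₁^{2T}) = det(λ²·S₀ᵀ − S₁ᵀ) · det S₁ᵀ` for all real `λ`. -/
theorem interleaved_hankel_pencil_det (s : ℕ → ℝ) (T : ℕ) (lam : ℝ) :
    (lam • hankel (interleave s) 0 (2 * T) - hankel (interleave s) 1 (2 * T)).det =
      (lam ^ 2 • hankel s 0 T - hankel s 1 T).det * (hankel s 1 T).det := by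
  set A := lam • hankel s 0 T with hA
  set B := -hankel s 1 T with hB
  set D := lam • hankel s 1 T with hD
  set E := lam ^ 2 • hankel s 0 T - hankel s 1 T with hE
  have hsub : (lam • hankel (interleave s) 0 (2 * T) - hankel (interleave s) 1 (2 * T)).submatrix
      (pairEquiv T) (pairEquiv T) = fromBlocks A B B D := by
    ext x y
    rcases x with a | a <;> rcases y with b | b <;>
      simp only [submatrix_apply, pairEquiv, Equiv.coe_fn_mk, Sum.elim_inl, Sum.elim_inr,
        fromBlocks_apply₁₁, fromBlocks_apply₁₂, fromBlocks_apply₂₁, fromBlocks_apply₂₂,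
        Matrix.sub_apply, Matrix.smul_apply, hankel, interleave, of_apply, Matrix.neg_apply, smul_eq_mul,
        hA, hB, hD]
    · rw [if_pos (by omega), if_neg (by omega)]
      have h2 : (2 * (a:ℕ) + 2 * (b:ℕ) + 0) / 2 = (a:ℕ) + (b:ℕ) + 0 := by omega
      rw [h2]; ring
    · rw [if_neg (by omega), if_pos (by omega)]
      have h2 : (2 * (a:ℕ) + (2 * (b:ℕ) + 1) + 1) / 2 = (a:ℕ) + (b:ℕ) + 1 := by omega
      rw [h2]; ring
    · rw [if_neg (by omega), if_pos (by omega)]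
      have h2 : (2 * (a:ℕ) + 1 + 2 * (b:ℕ) + 1) / 2 = (a:ℕ) + (b:ℕ) + 1 := by omega
      rw [h2]; ring
    · rw [if_pos (by omega), if_neg (by omega)]
      have h2 : (2 * (a:ℕ) + 1 + (2 * (b:ℕ) + 1) + 0) / 2 = (a:ℕ) + (b:ℕ) + 1 := by omega
      rw [h2]; ring
  have hdet : (lam • hankel (interleave s) 0 (2 * T) - hankel (interleave s) 1 (2 * T)).det
      = (fromBlocks A B B D).det := by
    rw [← hsub, det_submatrix_equiv_self]
  rw [hdet]
  -- column operation: right-multiply by unitriangular matrix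
  have hU : fromBlocks A B B D * fromBlocks (1 : Matrix (Fin T) (Fin T) ℝ) (lam • 1) 0 1 =
      fromBlocks A E B 0 := by
    have k1 : A * (lam • (1 : Matrix (Fin T) (Fin T) ℝ)) + B * 1 = E := by
      rw [Matrix.mul_smul, Matrix.mul_one, Matrix.mul_one, hA, hB, hE, smul_smul, ← pow_two,
        sub_eq_add_neg]
    have k2 : B * (lam • (1 : Matrix (Fin T) (Fin T) ℝ)) + D * 1 = 0 := by
      rw [Matrix.mul_smul, Matrix.mul_one, Matrix.mul_one, hB, hD, smul_neg, neg_add_cancel]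
    rw [fromBlocks_multiply]
    simp only [Matrix.mul_one, Matrix.mul_zero, add_zero] at k1 k2 ⊢
    rw [k1, k2]
  -- block swap
  have hP : fromBlocks A E B 0 * fromBlocks (0 : Matrix (Fin T) (Fin T) ℝ) 1 1 0 =
      fromBlocks E A 0 B := by
    simp only [fromBlocks_multiply, Matrix.mul_one, Matrix.mul_zero, Matrix.zero_mul,
      add_zero, zero_add]
  have hdetU : (fromBlocks (1 : Matrix (Fin T) (Fin T) ℝ) (lam • (1 : Matrix (Fin T) (Fin T) ℝ))
      (0 : Matrix (Fin T) (Fin T) ℝ) (1 : Matrix (Fin T) (Fin T) ℝ)).det = 1 := by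
    simp [det_fromBlocks_zero₂₁]
  have e1 : (fromBlocks A B B D).det = (fromBlocks A E B 0).det := by
    have := congrArg Matrix.det hU
    rwa [det_mul, hdetU, mul_one] at this
  have e2 : (fromBlocks A E B 0).det * (-1 : ℝ) ^ T = (fromBlocks E A 0 B).det := by
    have := congrArg Matrix.det hP
    rwa [det_mul, det_swapBlocks] at this
  have e3 : (fromBlocks E A 0 B).det = E.det * ((-1:ℝ)^T * (hankel s 1 T).det) := by
    rw [det_fromBlocks_zero₂₁, hB, det_neg]
    simp [Fintype.card_fin]
  have hsq : ((-1:ℝ)^T) * ((-1:ℝ)^T) = 1 := by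
    rw [← pow_add]
    exact (neg_one_pow_eq_one_iff_even (by norm_num)).2 (Even.add_self T)
  calc (fromBlocks A B B D).det
      = (fromBlocks A E B 0).det := e1
    _ = (fromBlocks A E B 0).det * (((-1:ℝ)^T) * ((-1:ℝ)^T)) := by rw [hsq, mul_one]
    _ = (fromBlocks E A 0 B).det * (-1:ℝ)^T := by rw [← mul_assoc, e2]
    _ = E.det * ((-1:ℝ)^T * (hankel s 1 T).det) * (-1:ℝ)^T := by rw [e3]
    _ = E.det * (hankel s 1 T).det * (((-1:ℝ)^T) * ((-1:ℝ)^T)) := by ring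
    _ = E.det * (hankel s 1 T).det := by rw [hsq]; ring
end

section
/- Suppose det(S₁ᵀ) ≠ 0, where S₀ᵀ and S₁ᵀ are the T×T Hankel matrices (S₀ᵀ)_{ij} = s_{i+j−2}, (S₁ᵀ)_{ij} = s_{i+j−1}, and H₀^{2T}, H₁^{2T} are the 2T×2T Hankel matrices built from the interleaved sequence h_{2k} = sₖ, h_{2k+1} = 0. Then μ > 0 is a generalized eigenvalue of the pencil (S₁ᵀ, S₀ᵀ) (i.e. det(μ·S₀ᵀ − S₁ᵀ) = 0) if and only if both √μ and −√μ are generalized eigenvalues of the pencil (H₁^{2T}, H₀^{2T}) (i.e. det(±√μ·H₀^{2T} − H₁^{2T}) = 0). -/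
open Matrix

/-- The parity interleaving equivalence `Fin T ⊕ Fin T ≃ Fin (2T)`:
even indices to the left factor, odd indices to the right factor. -/
def parityEquiv (T : ℕ) : (Fin T ⊕ Fin T) ≃ Fin (2 * T) where
  toFun := Sum.elim (fun a => ⟨2 * a, by omega⟩) (fun a => ⟨2 * a + 1, by omega⟩)
  invFun := fun i => if h : (i : ℕ) % 2 = 0 then Sum.inl ⟨(i : ℕ) / 2, by omega⟩
    else Sum.inr ⟨(i : ℕ) / 2, by omega⟩
  left_inv := by
    rintro (a | a)
    · simp only [Sum.elim_inl]
      simp only [show (2 * (a : ℕ)) % 2 = 0 by omega, ↓reduceDIte]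
      congr 1
      exact Fin.ext (show (2 * (a : ℕ)) / 2 = a by omega)
    · simp only [Sum.elim_inr]
      simp only [show ¬(2 * (a : ℕ) + 1) % 2 = 0 by omega, ↓reduceDIte]
      congr 1
      exact Fin.ext (show (2 * (a : ℕ) + 1) / 2 = a by omega)
  right_inv := by
    rintro ⟨i, hi⟩
    by_cases h : i % 2 = 0 <;> simp [h] <;> omega

/-- After reindexing by parity, `c•H₀ − H₁` becomes the block matrix
`[[c•S₀, −S₁], [−S₁, c•S₁]]`. -/
lemma submatrix_parity (s : ℕ → ℝ) (T : ℕ) (c : ℝ) :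
    (c • hankel (interleave s) 0 (2 * T)
      - hankel (interleave s) 1 (2 * T)).submatrix (parityEquiv T) (parityEquiv T)
      = fromBlocks (c • hankel s 0 T) (-(hankel s 1 T)) (-(hankel s 1 T)) (c • hankel s 1 T) := by
  ext i j
  rcases i with a | a <;> rcases j with b | b <;>
    simp only [parityEquiv, Equiv.coe_fn_mk, Sum.elim_inl, Sum.elim_inr, submatrix_apply,
      Matrix.sub_apply, Matrix.smul_apply, fromBlocks_apply₁₁, fromBlocks_apply₁₂, fromBlocks_apply₂₁,
      fromBlocks_apply₂₂, hankel, interleave, of_apply, smul_eq_mul, Matrix.neg_apply]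
  · rw [if_pos (by omega), if_neg (by omega), sub_zero]
    congr 2; omega
  · rw [if_neg (by omega), if_pos (by omega), mul_zero, zero_sub]
    congr 2; omega
  · rw [if_neg (by omega), if_pos (by omega), mul_zero, zero_sub]
    congr 2; omega
  · rw [if_pos (by omega), if_neg (by omega), sub_zero]
    congr 2; omega

/-- Key determinant identity: `det(c•H₀ − H₁) = det S₁ · det(c²•S₀ − S₁)` for `c ≠ 0`. -/
lemma key_det (s : ℕ → ℝ) (T : ℕ) (hS1 : (hankel s 1 T).det ≠ 0) (c : ℝ) (hc : c ≠ 0) :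
    (c • hankel (interleave s) 0 (2 * T) - hankel (interleave s) 1 (2 * T)).det
      = (hankel s 1 T).det * ((c ^ 2) • hankel s 0 T - hankel s 1 T).det := by
  set A := hankel s 0 T with hA
  set B := hankel s 1 T with hB
  have hBu : IsUnit B.det := isUnit_iff_ne_zero.mpr hS1
  have hBB : B * B⁻¹ = 1 := Matrix.mul_nonsing_inv B hBu
  have hB'B : B⁻¹ * B = 1 := Matrix.nonsing_inv_mul B hBu
  letI instInv : Invertible (c • B) :=
    ⟨c⁻¹ • B⁻¹,
      by rw [Matrix.smul_mul, Matrix.mul_smul, smul_smul, hB'B, inv_mul_cancel₀ hc, one_smul],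
      by rw [Matrix.smul_mul, Matrix.mul_smul, smul_smul, hBB, mul_inv_cancel₀ hc, one_smul]⟩
  have hdet := Matrix.det_submatrix_equiv_self (parityEquiv T)
    (c • hankel (interleave s) 0 (2 * T) - hankel (interleave s) 1 (2 * T))
  rw [submatrix_parity s T c] at hdet
  rw [← hdet, Matrix.det_fromBlocks₂₂]
  have hinv : ⅟(c • B) = c⁻¹ • B⁻¹ := rfl
  have h1 : c • A - (-B) * ⅟(c • B) * (-B) = c⁻¹ • ((c ^ 2) • A - B) := by
    rw [hinv, Matrix.neg_mul, Matrix.mul_neg, Matrix.neg_mul, neg_neg,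
      Matrix.mul_smul, Matrix.smul_mul, hBB, Matrix.one_mul, smul_sub, smul_smul]
    congr 2
    field_simp
  rw [h1, Matrix.det_smul, Matrix.det_smul]
  simp only [← hB]
  have hcc : c ^ Fintype.card (Fin T) * c⁻¹ ^ Fintype.card (Fin T) = 1 := by
    rw [← mul_pow, mul_inv_cancel₀ hc, one_pow]
  linear_combination B.det * ((c ^ 2) • A - B).det * hcc

/-- if `det S₁ᵀ ≠ 0`, then `μ > 0` is a generalized eigenvalue of the pencil
`(S₁ᵀ, S₀ᵀ)` iff both `√μ` and `−√μ` are generalized eigenvalues of `(H₁^{2T}, H₀^{2T})`. -/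
theorem stieltjes_hamburger_eigenvalue_correspondence (s : ℕ → ℝ) (T : ℕ)
    (hS1 : (hankel s 1 T).det ≠ 0) (mu : ℝ) (hmu : 0 < mu) :
    (mu • hankel s 0 T - hankel s 1 T).det = 0 ↔
      ((Real.sqrt mu • hankel (interleave s) 0 (2 * T)
          - hankel (interleave s) 1 (2 * T)).det = 0 ∧
        ((-Real.sqrt mu) • hankel (interleave s) 0 (2 * T)
          - hankel (interleave s) 1 (2 * T)).det = 0) := by
  have hx : Real.sqrt mu ≠ 0 := ne_of_gt (Real.sqrt_pos.mpr hmu)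
  have hx2 : Real.sqrt mu ^ 2 = mu := Real.sq_sqrt hmu.le
  have h1 := key_det s T hS1 (Real.sqrt mu) hx
  have h2 := key_det s T hS1 (-Real.sqrt mu) (neg_ne_zero.mpr hx)
  rw [hx2] at h1
  rw [neg_pow, hx2] at h2
  norm_num at h2
  rw [← neg_smul] at h2
  constructor
  · intro h
    rw [h1, h2, h]
    simp
  · rintro ⟨h, -⟩
    rw [h1] at h
    rcases mul_eq_zero.mp h with h' | h'
    · exact absurd h' hS1
    · exact h'
end
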